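/- For every i, j ∈ {1,…,n}, the mixed second moments under π_{m−1} satisfy Σ_{s ∈ {c,d,u}} Σ_{r ∈ {c,d,u}} E_{π_{m−1}}[x^s_i · x^r_j] = α_{i,j} + β_{i,2} γ_j + β_{j,2} γ_i + ψ_{i,j}, where γ_i = p_i (1/μ^d_i + 1/μ^u_i); β_{i,2} = Σ_{k=1}^{m−2} (p_i/μ^c_i)^k · Z(m−2−k)/Z(m−1); α_{i,i} = Σ_{k=1}^{m−1} (2k−1)(p_i/μ^c_i)^k · Z(m−1−k)/Z(m−1) and, for i ≠ j, α_{i,j} = Σ_{k ≥ 1, ℓ ≥ 1, k+ℓ ≤ m−1} (p_i/μ^c_i)^k (p_j/μ^c_j)^ℓ · Z(m−1−k−ℓ)/Z(m−1); and ψ_{i,j} = (γ_i/Z(m−1)) · (γ_j Z(m−3) + 1{i=j} Z(m−2)). -/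

import Mathlib

open scoped BigOperators

/-- A state of the closed queueing network: numbers of tasks at each client's
downlink (`d`), computation (`c`), and uplink (`u`) servers. -/
structure St (n : ℕ) where
  d : Fin n → ℕ
  c : Fin n → ℕ
  u : Fin n → ℕ

namespace St

variable {n : ℕ}

/-- Total number of tasks in a state. -/
def total (x : St n) : ℕ := ∑ i, (x.d i + x.c i + x.u i)

/-- Product-form weight of a state. -/
noncomputable def w (p μc μd μu : Fin n → ℝ) (x : St n) : ℝ :=
  ∏ i,
    (p i / μc i) ^ x.c i *
      ((p i / μd i) ^ x.d i / (Nat.factorial (x.d i) : ℝ)) *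
      ((p i / μu i) ^ x.u i / (Nat.factorial (x.u i) : ℝ))

/-- Normalizing constant `Z(k)` (it vanishes for `k < 0`). -/
noncomputable def Z (p μc μd μu : Fin n → ℝ) (k : ℤ) : ℝ :=
  ∑' x : St n, if (total x : ℤ) = k then w p μc μd μu x else 0

/-- Product-form distribution `π_k`. -/
noncomputable def pd (p μc μd μu : Fin n → ℝ) (k : ℤ) (x : St n) : ℝ :=
  w p μc μd μu x / Z p μc μd μu k

/-- Expectation of `f` under the product-form distribution `π_k`. -/
noncomputable def Epi (p μc μd μu : Fin n → ℝ) (k : ℤ) (f : St n → ℝ) : ℝ :=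
  ∑' x : St n, if (total x : ℤ) = k then f x * pd p μc μd μu k x else 0

end St

open St

/-- The three coordinate blocks `c`, `d`, `u` of a state, indexed by `Fin 3`. -/
def coord {n : ℕ} (s : Fin 3) (x : St n) (i : Fin n) : ℕ :=
  if s = 0 then x.c i else if s = 1 then x.d i else x.u i

/-!
Reading a state as a configuration `y : Fin 3 × Fin n → ℕ`, its weight `w` becomes a product of
one-coordinate factors: geometric `ρ ^ v` for the computation queues and Poisson `θ ^ v / v!` for
the downlink and uplink queues. Write `Σ_K` for the sum over the layer `Σ_b y_b = K`. Shifting one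
coordinate moves such sums to lower layers. For a Poisson coordinate, `v θ ^ v / v! =
θ θ ^ (v - 1) / (v - 1)!` gives `Σ_K y_b F(y) w(y) = θ Σ_(K-1) F(y + e_b) w(y)`. For a geometric
one, the layer-cake identity `y_b = Σ_(k ≥ 1) [k ≤ y_b]` and `w(y + k e_b) = ρ ^ k w(y)` give
`Σ_K y_b F(y) w(y) = Σ_k ρ ^ k Σ_(K-k) F(y + k e_b) w(y)`, and `y_b² = Σ_(k ≤ y_b) (2k - 1)`
handles squares. Expanding `(Σ_s x^s_i)(Σ_r x^r_j)` into nine products, one or two shifts reduce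
each of them to normalizing constants of lower layers.
-/

open Finset

namespace ProductForm

variable {ι : Type*} [DecidableEq ι]

lemma sub_single_add_single {y : ι → ℕ} {b : ι} {k : ℕ} (h : k ≤ y b) :
    y - Pi.single b k + Pi.single b k = y := by
  ext c
  rcases eq_or_ne c b with rfl | hc
  · simp [Nat.sub_add_cancel h]
  · simp [hc]

variable [Fintype ι]

lemma sum_add_single (y : ι → ℕ) (b : ι) (k : ℕ) :
    univ.sum (y + Pi.single b k) = univ.sum y + k := by
  simp [sum_add_distrib]

lemma sum_piAntidiag_ite_le (b : ι) (k K : ℕ) (G : (ι → ℕ) → ℝ) :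
    ∑ y ∈ univ.piAntidiag (K + k), (if k ≤ y b then G y else 0) =
      ∑ y ∈ univ.piAntidiag K, G (y + Pi.single b k) := by
  rw [← sum_filter]
  refine sum_nbij' (· - Pi.single b k) (· + Pi.single b k) ?_ ?_ ?_ ?_ ?_
  · intro y hy
    simp only [mem_filter, mem_piAntidiag, mem_univ, imp_true_iff, and_true] at hy ⊢
    have := sum_add_single (y - Pi.single b k) b k
    rw [sub_single_add_single hy.2] at this
    omega
  · intro y hy
    simp only [mem_filter, mem_piAntidiag, mem_univ, imp_true_iff, and_true] at hy ⊢
    rw [sum_add_single, hy]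
    simp
  · intro y hy
    exact sub_single_add_single (mem_filter.mp hy).2
  · intro y _
    exact add_tsub_cancel_right y _
  · intro y hy
    rw [sub_single_add_single (mem_filter.mp hy).2]

lemma tsum_ite_sum_eq (g : (ι → ℕ) → ℝ) (k : ℤ) :
    ∑' y : ι → ℕ, (if ((univ.sum y : ℕ) : ℤ) = k then g y else 0) =
      if 0 ≤ k then ∑ y ∈ univ.piAntidiag k.toNat, g y else 0 := by
  split_ifs with hk
  · lift k to ℕ using hk
    rw [tsum_eq_sum (s := univ.piAntidiag k)]
    · exact sum_congr rfl fun y hy => if_pos (by exact_mod_cast (mem_piAntidiag.mp hy).1)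
    · intro y hy
      exact if_neg fun h => hy (mem_piAntidiag.mpr ⟨by exact_mod_cast h, by simp⟩)
  · convert tsum_zero with y
    exact if_neg (by omega)

variable (a : ι → ℕ → ℝ)

def weight (y : ι → ℕ) : ℝ := ∏ b, a b (y b)

def partitionFn (k : ℤ) : ℝ :=
  if 0 ≤ k then ∑ y ∈ univ.piAntidiag k.toNat, weight a y else 0

lemma partitionFn_natCast (K : ℕ) :
    partitionFn a K = ∑ y ∈ univ.piAntidiag K, weight a y := by
  simp [partitionFn]

lemma partitionFn_of_neg {k : ℤ} (hk : k < 0) : partitionFn a k = 0 :=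
  if_neg hk.not_ge

lemma partitionFn_sub_natCast {K k : ℕ} (h : k ≤ K) :
    partitionFn a ((K : ℤ) - k) = ∑ y ∈ univ.piAntidiag (K - k), weight a y := by
  rw [← partitionFn_natCast, Nat.cast_sub h]

variable {a}

lemma weight_add_single {y : ι → ℕ} {b : ι} {k : ℕ} {r : ℝ}
    (h : a b (y b + k) = r * a b (y b)) :
    weight a (y + Pi.single b k) = r * weight a y := by
  rw [weight, weight, Fintype.prod_eq_mul_prod_compl b, Fintype.prod_eq_mul_prod_compl b]
  have hc : ∀ c ∈ ({b}ᶜ : Finset ι), a c ((y + Pi.single b k : ι → ℕ) c) = a c (y c) := by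
    intro c hc
    simp [show c ≠ b by simpa using hc]
  rw [prod_congr rfl hc]
  simp [h, mul_assoc]

lemma le_of_mem_piAntidiag {K : ℕ} {y : ι → ℕ} (hy : y ∈ univ.piAntidiag K) (b : ι) :
    y b ≤ K := by
  rw [mem_piAntidiag] at hy
  exact hy.1 ▸ single_le_sum (fun _ _ => Nat.zero_le _) (mem_univ b)

lemma sum_Icc_ite_le (h : ℕ → ℝ) {v K : ℕ} (hv : v ≤ K) :
    ∑ k ∈ Icc 1 K, (if k ≤ v then h k else 0) = ∑ k ∈ Icc 1 v, h k := by
  rw [← sum_filter]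
  congr 1
  ext k
  simp only [mem_filter, mem_Icc]
  omega

section Geometric

variable {b : ι} {ρ : ℝ} (hb : ∀ v, a b v = ρ ^ v)
include hb

lemma sum_layerCake_mul_weight_of_geometric (h : ℕ → ℝ) (F : (ι → ℕ) → ℝ) (K : ℕ) :
    ∑ y ∈ univ.piAntidiag K, (∑ k ∈ Icc 1 (y b), h k) * F y * weight a y =
      ∑ k ∈ Icc 1 K, h k * ρ ^ k *
        ∑ y ∈ univ.piAntidiag (K - k), F (y + Pi.single b k) * weight a y := by
  calc _ = ∑ y ∈ univ.piAntidiag K, ∑ k ∈ Icc 1 K,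
        (if k ≤ y b then h k * (F y * weight a y) else 0) := by
        refine sum_congr rfl fun y hy => ?_
        rw [← sum_Icc_ite_le _ (le_of_mem_piAntidiag hy b), sum_mul, sum_mul]
        refine sum_congr rfl fun k _ => ?_
        split_ifs <;> ring
    _ = ∑ k ∈ Icc 1 K, ∑ y ∈ univ.piAntidiag K,
        (if k ≤ y b then h k * (F y * weight a y) else 0) := sum_comm
    _ = _ := by
        refine sum_congr rfl fun k hk => ?_
        have hshift := sum_piAntidiag_ite_le b k (K - k) (fun y => h k * (F y * weight a y))
        rw [Nat.sub_add_cancel (mem_Icc.mp hk).2] at hshift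
        rw [hshift, mul_sum]
        refine sum_congr rfl fun y _ => ?_
        rw [weight_add_single (r := ρ ^ k) (by rw [hb, hb, pow_add]; ring)]
        ring

lemma sum_coord_mul_weight_of_geometric (F : (ι → ℕ) → ℝ) (K : ℕ) :
    ∑ y ∈ univ.piAntidiag K, (y b : ℝ) * F y * weight a y =
      ∑ k ∈ Icc 1 K, ρ ^ k *
        ∑ y ∈ univ.piAntidiag (K - k), F (y + Pi.single b k) * weight a y := by
  simpa using sum_layerCake_mul_weight_of_geometric hb (fun _ => 1) F K

lemma sum_coord_weight_of_geometric (K : ℕ) :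
    ∑ y ∈ univ.piAntidiag K, (y b : ℝ) * weight a y =
      ∑ k ∈ Icc 1 K, ρ ^ k * partitionFn a ((K : ℤ) - k) := by
  have := sum_coord_mul_weight_of_geometric hb (fun _ => 1) K
  simp only [mul_one, one_mul] at this
  rw [this]
  exact sum_congr rfl fun k hk => by rw [partitionFn_sub_natCast a (mem_Icc.mp hk).2]

lemma sum_coord_sq_weight_of_geometric (K : ℕ) :
    ∑ y ∈ univ.piAntidiag K, (y b : ℝ) * (y b : ℝ) * weight a y =
      ∑ k ∈ Icc 1 K, (2 * (k : ℝ) - 1) * ρ ^ k * partitionFn a ((K : ℤ) - k) := by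
  have hsq : ∀ v : ℕ, ∑ k ∈ Icc 1 v, (2 * (k : ℝ) - 1) = (v : ℝ) * (v : ℝ) := by
    intro v
    induction v with
    | zero => simp
    | succ v ih => rw [sum_Icc_succ_top (by omega), ih]; push_cast; ring
  have := sum_layerCake_mul_weight_of_geometric hb (fun k => 2 * (k : ℝ) - 1) (fun _ => 1) K
  simp only [hsq, mul_one, one_mul] at this
  rw [this]
  exact sum_congr rfl fun k hk => by rw [partitionFn_sub_natCast a (mem_Icc.mp hk).2]

end Geometric

lemma sum_coord_mul_coord_weight_of_geometric {b c : ι} (hbc : b ≠ c) {ρ σ : ℝ}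
    (hb : ∀ v, a b v = ρ ^ v) (hc : ∀ v, a c v = σ ^ v) (K : ℕ) :
    ∑ y ∈ univ.piAntidiag K, (y b : ℝ) * (y c : ℝ) * weight a y =
      ∑ k ∈ Icc 1 K, ∑ l ∈ Icc 1 (K - k),
        ρ ^ k * σ ^ l * partitionFn a ((K : ℤ) - k - l) := by
  rw [sum_coord_mul_weight_of_geometric hb]
  refine sum_congr rfl fun k hk => ?_
  simp only [Pi.add_apply, Pi.single_apply, hbc.symm, if_false, add_zero]
  rw [sum_coord_weight_of_geometric hc, mul_sum]
  refine sum_congr rfl fun l _ => ?_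
  rw [Nat.cast_sub (mem_Icc.mp hk).2]
  ring

section Poisson

variable {b : ι} {θ : ℝ} (hb : ∀ v, a b v = θ ^ v / v.factorial)
include hb

lemma sum_coord_mul_weight_succ_of_poisson (F : (ι → ℕ) → ℝ) (K : ℕ) :
    ∑ y ∈ univ.piAntidiag (K + 1), (y b : ℝ) * F y * weight a y =
      θ * ∑ y ∈ univ.piAntidiag K, F (y + Pi.single b 1) * weight a y := by
  calc _ = ∑ y ∈ univ.piAntidiag (K + 1),
        (if 1 ≤ y b then (y b : ℝ) * F y * weight a y else 0) := by
        refine sum_congr rfl fun y _ => ?_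
        split_ifs with h
        · rfl
        · simp [show y b = 0 by omega]
    _ = _ := by
        rw [sum_piAntidiag_ite_le, mul_sum]
        refine sum_congr rfl fun y _ => ?_
        have hv : (y b : ℝ) + 1 ≠ 0 := by positivity
        rw [weight_add_single (r := θ / (y b + 1))]
        · simp only [Pi.add_apply, Pi.single_eq_same, Nat.cast_add, Nat.cast_one]
          field_simp
        · rw [hb, hb, pow_succ, Nat.factorial_succ]
          push_cast
          field_simp

lemma sum_coord_weight_of_poisson (K : ℕ) :
    ∑ y ∈ univ.piAntidiag K, (y b : ℝ) * weight a y = θ * partitionFn a ((K : ℤ) - 1) := by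
  cases K with
  | zero => simp [partitionFn_of_neg]
  | succ K =>
    simpa [partitionFn_natCast] using sum_coord_mul_weight_succ_of_poisson hb (fun _ => 1) K

end Poisson

lemma sum_coord_mul_coord_weight_of_poisson {b c : ι} {θ η : ℝ}
    (hb : ∀ v, a b v = θ ^ v / v.factorial) (hc : ∀ v, a c v = η ^ v / v.factorial) (K : ℕ) :
    ∑ y ∈ univ.piAntidiag K, (y b : ℝ) * (y c : ℝ) * weight a y =
      θ * η * partitionFn a ((K : ℤ) - 2) +
        if b = c then η * partitionFn a ((K : ℤ) - 1) else 0 := by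
  cases K with
  | zero => simp [partitionFn_of_neg]
  | succ K =>
    rw [show ∑ y ∈ univ.piAntidiag (K + 1), (y b : ℝ) * (y c : ℝ) * weight a y =
        ∑ y ∈ univ.piAntidiag (K + 1), (y c : ℝ) * (y b : ℝ) * weight a y from
      sum_congr rfl fun y _ => by ring, sum_coord_mul_weight_succ_of_poisson hc]
    have h1 : ((K + 1 : ℕ) : ℤ) - 1 = K := by push_cast; ring
    have h2 : ((K + 1 : ℕ) : ℤ) - 2 = K - 1 := by push_cast; ring
    rw [h1, h2, partitionFn_natCast]
    rcases eq_or_ne b c with rfl | hbc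
    · simp only [Pi.add_apply, Pi.single_eq_same, Nat.cast_add, Nat.cast_one, add_mul, one_mul,
        sum_add_distrib, sum_coord_weight_of_poisson hb, if_true]
      ring
    · simp only [Pi.add_apply, Pi.single_apply, hbc, if_false, add_zero,
        sum_coord_weight_of_poisson hb]
      ring

lemma sum_coord_mul_coord_weight_of_poisson_of_geometric {b c : ι} (hbc : b ≠ c) {θ ρ : ℝ}
    (hb : ∀ v, a b v = θ ^ v / v.factorial) (hc : ∀ v, a c v = ρ ^ v) (K : ℕ) :
    ∑ y ∈ univ.piAntidiag K, (y b : ℝ) * (y c : ℝ) * weight a y =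
      θ * ∑ k ∈ Icc 1 (K - 1), ρ ^ k * partitionFn a ((K : ℤ) - 1 - k) := by
  cases K with
  | zero => simp
  | succ K =>
    rw [sum_coord_mul_weight_succ_of_poisson hb]
    simp only [Pi.add_apply, Pi.single_apply, hbc.symm, if_false, add_zero,
      sum_coord_weight_of_geometric hc]
    rw [show ((K + 1 : ℕ) : ℤ) - 1 = K by push_cast; ring, Nat.add_sub_cancel]

lemma sum_coord_mul_coord_weight_of_geometric_of_poisson {b c : ι} (hbc : b ≠ c) {ρ θ : ℝ}
    (hb : ∀ v, a b v = ρ ^ v) (hc : ∀ v, a c v = θ ^ v / v.factorial) (K : ℕ) :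
    ∑ y ∈ univ.piAntidiag K, (y b : ℝ) * (y c : ℝ) * weight a y =
      θ * ∑ k ∈ Icc 1 (K - 1), ρ ^ k * partitionFn a ((K : ℤ) - 1 - k) := by
  rw [← sum_coord_mul_coord_weight_of_poisson_of_geometric hbc.symm hc hb K]
  exact sum_congr rfl fun y _ => by ring

end ProductForm

open ProductForm

namespace St

variable {n : ℕ}

def equivFun : St n ≃ (Fin 3 × Fin n → ℕ) where
  toFun x b := coord b.1 x b.2
  invFun y := ⟨fun i => y (1, i), fun i => y (0, i), fun i => y (2, i)⟩
  left_inv _ := rfl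
  right_inv y := by
    funext ⟨s, i⟩
    fin_cases s <;> rfl

lemma coord_equivFun_symm (s : Fin 3) (y : Fin 3 × Fin n → ℕ) (i : Fin n) :
    coord s (equivFun.symm y) i = y (s, i) := by
  fin_cases s <;> rfl

lemma total_eq_sum_equivFun (x : St n) : total x = univ.sum (equivFun x) := by
  rw [total, Fintype.sum_prod_type, Fin.sum_univ_three, sum_add_distrib, sum_add_distrib,
    add_comm (∑ i, x.d i)]
  rfl

noncomputable def netWeight (p μc μd μu : Fin n → ℝ) (b : Fin 3 × Fin n) (v : ℕ) : ℝ :=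
  if b.1 = 0 then (p b.2 / μc b.2) ^ v
  else if b.1 = 1 then (p b.2 / μd b.2) ^ v / v.factorial
  else (p b.2 / μu b.2) ^ v / v.factorial

variable (p μc μd μu : Fin n → ℝ)

lemma w_eq_weight (x : St n) : w p μc μd μu x = weight (netWeight p μc μd μu) (equivFun x) := by
  simp [w, weight, equivFun, coord, netWeight, Fintype.prod_prod_type, Fin.prod_univ_three,
    prod_mul_distrib]

lemma Z_eq_partitionFn : Z p μc μd μu = partitionFn (netWeight p μc μd μu) := by
  funext k
  rw [Z, ← equivFun.symm.tsum_eq, partitionFn, ← tsum_ite_sum_eq]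
  simp only [total_eq_sum_equivFun, w_eq_weight, Equiv.apply_symm_apply]

lemma Epi_natCast (K : ℕ) (f : St n → ℝ) :
    Epi p μc μd μu K f =
      (∑ y ∈ univ.piAntidiag K, f (equivFun.symm y) * weight (netWeight p μc μd μu) y) /
        partitionFn (netWeight p μc μd μu) K := by
  rw [Epi, ← equivFun.symm.tsum_eq, sum_div]
  simp only [pd, Z_eq_partitionFn, total_eq_sum_equivFun, w_eq_weight, Equiv.apply_symm_apply]
  rw [tsum_ite_sum_eq]
  simp [mul_div_assoc]

lemma netWeight_c (i : Fin n) (v : ℕ) :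
    netWeight p μc μd μu (0, i) v = (p i / μc i) ^ v := rfl

lemma netWeight_d (i : Fin n) (v : ℕ) :
    netWeight p μc μd μu (1, i) v = (p i / μd i) ^ v / v.factorial := rfl

lemma netWeight_u (i : Fin n) (v : ℕ) :
    netWeight p μc μd μu (2, i) v = (p i / μu i) ^ v / v.factorial := rfl

lemma sum_sum_coord_mul_coord_weight (K : ℕ) (i j : Fin n) :
    ∑ s : Fin 3, ∑ r : Fin 3, ∑ y ∈ univ.piAntidiag K,
        (y (s, i) : ℝ) * (y (r, j) : ℝ) * weight (netWeight p μc μd μu) y =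
      (if i = j then
          ∑ k ∈ Icc 1 K, (2 * (k : ℝ) - 1) * (p i / μc i) ^ k *
            partitionFn (netWeight p μc μd μu) ((K : ℤ) - k)
        else
          ∑ k ∈ Icc 1 K, ∑ l ∈ Icc 1 (K - k), (p i / μc i) ^ k * (p j / μc j) ^ l *
            partitionFn (netWeight p μc μd μu) ((K : ℤ) - k - l)) +
      (∑ k ∈ Icc 1 (K - 1), (p i / μc i) ^ k *
          partitionFn (netWeight p μc μd μu) ((K : ℤ) - 1 - k)) * (p j * (1 / μd j + 1 / μu j)) +
      (∑ k ∈ Icc 1 (K - 1), (p j / μc j) ^ k *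
          partitionFn (netWeight p μc μd μu) ((K : ℤ) - 1 - k)) * (p i * (1 / μd i + 1 / μu i)) +
      p i * (1 / μd i + 1 / μu i) *
        (p j * (1 / μd j + 1 / μu j) * partitionFn (netWeight p μc μd μu) ((K : ℤ) - 2) +
          (if i = j then (1 : ℝ) else 0) * partitionFn (netWeight p μc μd μu) ((K : ℤ) - 1)) := by
  have hc := netWeight_c p μc μd μu
  have hd := netWeight_d p μc μd μu
  have hu := netWeight_u p μc μd μu
  simp only [Fin.sum_univ_three,
    sum_coord_mul_coord_weight_of_geometric_of_poisson (by simp) (hc _) (hd _),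
    sum_coord_mul_coord_weight_of_geometric_of_poisson (by simp) (hc _) (hu _),
    sum_coord_mul_coord_weight_of_poisson_of_geometric (by simp) (hd _) (hc _),
    sum_coord_mul_coord_weight_of_poisson_of_geometric (by simp) (hu _) (hc _),
    sum_coord_mul_coord_weight_of_poisson (hd _) (hd _),
    sum_coord_mul_coord_weight_of_poisson (hd _) (hu _),
    sum_coord_mul_coord_weight_of_poisson (hu _) (hd _),
    sum_coord_mul_coord_weight_of_poisson (hu _) (hu _)]
  rcases eq_or_ne i j with rfl | hij
  · simp only [sum_coord_sq_weight_of_geometric (hc i), if_true, Prod.mk.injEq, Fin.reduceEq,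
      and_true, if_false, add_zero]
    ring
  · simp only [sum_coord_mul_coord_weight_of_geometric (by simpa using hij) (hc i) (hc j),
      Prod.mk.injEq, hij, and_false, if_false, add_zero, Fin.reduceEq, zero_mul]
    ring

end St

theorem stmt6_general (n m : ℕ) (hm : 1 ≤ m)
    (p μc μd μu : Fin n → ℝ)
    (i j : Fin n) :
    (∑ s : Fin 3, ∑ r : Fin 3,
        Epi p μc μd μu ((m : ℤ) - 1) (fun x => ((coord s x i : ℝ) * (coord r x j : ℝ)))) =
      (if i = j then
          ∑ k ∈ Finset.Icc 1 (m - 1),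
            (2 * (k : ℝ) - 1) * (p i / μc i) ^ k *
              (Z p μc μd μu ((m : ℤ) - 1 - k) / Z p μc μd μu ((m : ℤ) - 1))
        else
          ∑ k ∈ Finset.Icc 1 (m - 1), ∑ l ∈ Finset.Icc 1 (m - 1 - k),
            (p i / μc i) ^ k * (p j / μc j) ^ l *
              (Z p μc μd μu ((m : ℤ) - 1 - k - l) / Z p μc μd μu ((m : ℤ) - 1))) +
      (∑ k ∈ Finset.Icc 1 (m - 2),
          (p i / μc i) ^ k * (Z p μc μd μu ((m : ℤ) - 2 - k) / Z p μc μd μu ((m : ℤ) - 1))) *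
        (p j * (1 / μd j + 1 / μu j)) +
      (∑ k ∈ Finset.Icc 1 (m - 2),
          (p j / μc j) ^ k * (Z p μc μd μu ((m : ℤ) - 2 - k) / Z p μc μd μu ((m : ℤ) - 1))) *
        (p i * (1 / μd i + 1 / μu i)) +
      (p i * (1 / μd i + 1 / μu i) / Z p μc μd μu ((m : ℤ) - 1)) *
        (p j * (1 / μd j + 1 / μu j) * Z p μc μd μu ((m : ℤ) - 3) +
          (if i = j then (1 : ℝ) else 0) * Z p μc μd μu ((m : ℤ) - 2)) := by
  obtain ⟨K, rfl⟩ : ∃ K, m = K + 1 := ⟨m - 1, by omega⟩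
  have h1 : ((K + 1 : ℕ) : ℤ) - 1 = K := by push_cast; ring
  have h2 : ((K + 1 : ℕ) : ℤ) - 2 = K - 1 := by push_cast; ring
  have h3 : ((K + 1 : ℕ) : ℤ) - 3 = K - 2 := by push_cast; ring
  rw [h1, h2, h3, Nat.add_sub_cancel, show K + 1 - 2 = K - 1 by omega]
  simp only [Epi_natCast, coord_equivFun_symm, ← sum_div, Z_eq_partitionFn,
    sum_sum_coord_mul_coord_weight]
  simp only [← mul_div_assoc, ← sum_div, ← ite_div]
  ring

/-- Mixed second moments under `π_{m-1}`:
`Σ_{s,r ∈ {c,d,u}} E[x^s_i x^r_j] = α_{i,j} + β_{i,2} γ_j + β_{j,2} γ_i + ψ_{i,j}`. -/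
theorem stmt6 (n m : ℕ) (hn : 1 ≤ n) (hm : 1 ≤ m)
    (p μc μd μu : Fin n → ℝ)
    (hp : ∀ i, 0 < p i)
    (hμc : ∀ i, 0 < μc i) (hμd : ∀ i, 0 < μd i) (hμu : ∀ i, 0 < μu i)
    (i j : Fin n) :
    (∑ s : Fin 3, ∑ r : Fin 3,
        Epi p μc μd μu ((m : ℤ) - 1) (fun x => ((coord s x i : ℝ) * (coord r x j : ℝ)))) =
      (if i = j then
          ∑ k ∈ Finset.Icc 1 (m - 1),
            (2 * (k : ℝ) - 1) * (p i / μc i) ^ k *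
              (Z p μc μd μu ((m : ℤ) - 1 - k) / Z p μc μd μu ((m : ℤ) - 1))
        else
          ∑ k ∈ Finset.Icc 1 (m - 1), ∑ l ∈ Finset.Icc 1 (m - 1 - k),
            (p i / μc i) ^ k * (p j / μc j) ^ l *
              (Z p μc μd μu ((m : ℤ) - 1 - k - l) / Z p μc μd μu ((m : ℤ) - 1))) +
      (∑ k ∈ Finset.Icc 1 (m - 2),
          (p i / μc i) ^ k * (Z p μc μd μu ((m : ℤ) - 2 - k) / Z p μc μd μu ((m : ℤ) - 1))) *
        (p j * (1 / μd j + 1 / μu j)) +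
      (∑ k ∈ Finset.Icc 1 (m - 2),
          (p j / μc j) ^ k * (Z p μc μd μu ((m : ℤ) - 2 - k) / Z p μc μd μu ((m : ℤ) - 1))) *
        (p i * (1 / μd i + 1 / μu i)) +
      (p i * (1 / μd i + 1 / μu i) / Z p μc μd μu ((m : ℤ) - 1)) *
        (p j * (1 / μd j + 1 / μu j) * Z p μc μd μu ((m : ℤ) - 3) +
          (if i = j then (1 : ℝ) else 0) * Z p μc μd μu ((m : ℤ) - 2)) :=
  stmt6_general n m hm p μc μd μu i j
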